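/- Suppose 𝓕 = ⟨F_0, …, F_k⟩ is 𝓟-sharp in U, where 𝓟 = ⟨P_0, …, P_k⟩. Let 0 ≤ j ≤ k and let C_0, …, C_{m−1} be pairwise disjoint subsets of P_j, each closed in the subspace P_j. Then there is at most one index l < m for which there is no open set U' ⊆ U such that 𝓕 is (𝓟 ∖ C_l)-sharp in U'. -/

import Mathlib

open Set Topology

/-- A set is `Σ⁰₂` (Fσ) if it is a countable union of closed sets. -/
def IsFsigma {X : Type*} [TopologicalSpace X] (A : Set X) : Prop :=
  ∃ F : ℕ → Set X, (∀ n, IsClosed (F n)) ∧ A = ⋃ n, F n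

/-- A set is `Σ⁰₃` if it is a countable union of Gδ sets. -/
def IsSigma03 {X : Type*} [TopologicalSpace X] (A : Set X) : Prop :=
  ∃ G : ℕ → Set X, (∀ n, IsGδ (G n)) ∧ A = ⋃ n, G n

/-- A set is `Δ⁰₃` if both it and its complement are `Σ⁰₃`. -/
def IsDelta03 {X : Type*} [TopologicalSpace X] (A : Set X) : Prop :=
  IsSigma03 A ∧ IsSigma03 Aᶜ

/-- `Σ⁰₂`-measurable function: preimages of open sets are Fσ. -/
def Sigma2Measurable {X Y : Type*} [TopologicalSpace X] [TopologicalSpace Y]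
    (f : X → Y) : Prop :=
  ∀ U : Set Y, IsOpen U → IsFsigma (f ⁻¹' U)

/-- `Σ⁰₃`-measurable function: preimages of open sets are `Σ⁰₃`. -/
def Sigma3Measurable {X Y : Type*} [TopologicalSpace X] [TopologicalSpace Y]
    (f : X → Y) : Prop :=
  ∀ U : Set Y, IsOpen U → IsSigma03 (f ⁻¹' U)

/-- `f ∈ dec(Σ⁰₂, Δ⁰₃)`: there is a countable partition of the domain into `Δ⁰₃` pieces
on each of which `f` restricts (with the subspace topology) to a `Σ⁰₂`-measurable function. -/
def DecSigma2 {X Y : Type*} [TopologicalSpace X] [TopologicalSpace Y]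
    (f : X → Y) : Prop :=
  ∃ A : ℕ → Set X, (∀ m n, m ≠ n → Disjoint (A m) (A n)) ∧ (⋃ n, A n) = Set.univ ∧
    (∀ n, IsDelta03 (A n)) ∧ ∀ n, Sigma2Measurable ((A n).restrict f)

/-- `f ∈ dec(Σ⁰₁, Δ⁰₃)`: there is a countable partition of the domain into `Δ⁰₃` pieces
on each of which `f` restricts (with the subspace topology) to a continuous function. -/
def DecCont {X Y : Type*} [TopologicalSpace X] [TopologicalSpace Y]
    (f : X → Y) : Prop :=
  ∃ A : ℕ → Set X, (∀ m n, m ≠ n → Disjoint (A m) (A n)) ∧ (⋃ n, A n) = Set.univ ∧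
    (∀ n, IsDelta03 (A n)) ∧ ∀ n, Continuous ((A n).restrict f)

/-- `⟨F₀⟩` is `⟨P₀⟩`-sharp in `U` (base case of the sharpness notion for `dec(Σ⁰₁, Δ⁰₃)`). -/
def SharpP0 {X Y : Type*} [TopologicalSpace X] [TopologicalSpace Y]
    (f : X → Y) (P0 : Set Y) (F0 U : Set X) : Prop :=
  (U ∩ F0).Nonempty ∧ ∀ U' : Set X, IsOpen U' → U' ⊆ U → (U' ∩ F0).Nonempty →
    ¬ DecCont ((f ⁻¹' P0 ∩ F0 ∩ U').restrict f)

/-- `⟨F 0, …, F k⟩` is `⟨P 0, …, P k⟩`-sharp in `U`. -/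
def SharpP {X Y : Type*} [TopologicalSpace X] [TopologicalSpace Y]
    (f : X → Y) (P : ℕ → Set Y) (F : ℕ → Set X) : ℕ → Set X → Prop
  | 0, U => SharpP0 f (P 0) (F 0) U
  | (k+1), U => SharpP0 f (P (k+1)) (F (k+1)) U ∧
      ∀ U' : Set X, IsOpen U' → U' ⊆ U → (U' ∩ F (k+1)).Nonempty →
        ∃ U'' : Set X, IsOpen U'' ∧ U'' ⊆ U' ∧ SharpP f P F k U''

/-!
Suppose removing `C₁` and removing `C₂` from `P_j` both destroyed sharpness in every open
`U' ⊆ U`. At level `j` this yields nested open sets on which `f` restricted to `P_j \ C₁` and to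
`P_j \ C₂` both lie in `dec(Σ⁰₁, Δ⁰₃)`. As `Cᵢ` is relatively closed, `P_j \ Cᵢ = P_j ∩ Vᵢ` with
`Vᵢ` open, and `V₁ ∪ V₂ ⊇ P_j` by disjointness. The sets `f⁻¹(Vᵢ)` are `Σ⁰₃`, and in a perfectly
normal space a countable cover by `Σ⁰₃` sets refines to a `Δ⁰₃` partition, so the two
decompositions glue to one for `P_j` itself, contradicting sharpness. The levels above `j` are
untouched, and an induction on `k` carries the contradiction through the nested open sets in the
definition of sharpness.
-/

theorem Set.Countable.exists_seq_sUnion_eq {α : Type*} {𝒢 : Set (Set α)} (h𝒢 : 𝒢.Countable)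
    {p : Set α → Prop} (hp_empty : p ∅) (hp : ∀ G ∈ 𝒢, p G) :
    ∃ G : ℕ → Set α, (∀ n, p (G n)) ∧ ⋃₀ 𝒢 = ⋃ n, G n := by
  obtain ⟨G, hG⟩ := (h𝒢.insert ∅).exists_eq_range (insert_nonempty ∅ 𝒢)
  refine ⟨G, fun n => ?_, ?_⟩
  · rcases (hG ▸ mem_range_self n : G n ∈ insert ∅ 𝒢) with h | h
    · exact h ▸ hp_empty
    · exact hp _ h
  · rw [← sUnion_range, ← hG, sUnion_insert, empty_union]

section Sigma03

variable {X Z : Type*} [TopologicalSpace X] [TopologicalSpace Z]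

theorem isSigma03_iff_exists_countable {A : Set X} :
    IsSigma03 A ↔ ∃ 𝒢 : Set (Set X), 𝒢.Countable ∧ (∀ G ∈ 𝒢, IsGδ G) ∧ A = ⋃₀ 𝒢 := by
  constructor
  · rintro ⟨G, hG, rfl⟩
    exact ⟨range G, countable_range G, forall_mem_range.2 hG, (sUnion_range G).symm⟩
  · rintro ⟨𝒢, h𝒢c, h𝒢, rfl⟩
    obtain ⟨G, hG, hG𝒢⟩ := h𝒢c.exists_seq_sUnion_eq IsGδ.empty h𝒢
    exact ⟨G, hG, hG𝒢⟩

theorem IsGδ.isSigma03 {G : Set X} (h : IsGδ G) : IsSigma03 G :=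
  ⟨fun _ => G, fun _ => h, (iUnion_const G).symm⟩

theorem IsSigma03.iUnion {ι : Sort*} [Countable ι] {A : ι → Set X}
    (h : ∀ i, IsSigma03 (A i)) : IsSigma03 (⋃ i, A i) := by
  choose 𝒢 h𝒢c h𝒢 hA using fun i => isSigma03_iff_exists_countable.1 (h i)
  refine isSigma03_iff_exists_countable.2 ⟨⋃ i, 𝒢 i, countable_iUnion h𝒢c, ?_, ?_⟩
  · simp only [mem_iUnion]
    rintro G ⟨i, hG⟩
    exact h𝒢 i G hG
  · rw [sUnion_iUnion]
    exact iUnion_congr hA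

theorem IsSigma03.union {A B : Set X} (hA : IsSigma03 A) (hB : IsSigma03 B) :
    IsSigma03 (A ∪ B) := by
  rw [union_eq_iUnion]
  exact IsSigma03.iUnion (Bool.forall_bool.2 ⟨hB, hA⟩)

theorem IsSigma03.inter {A B : Set X} (hA : IsSigma03 A) (hB : IsSigma03 B) :
    IsSigma03 (A ∩ B) := by
  obtain ⟨G, hG, rfl⟩ := hA
  obtain ⟨H, hH, rfl⟩ := hB
  rw [iUnion_inter_iUnion]
  exact IsSigma03.iUnion fun m => IsSigma03.iUnion fun n => ((hG m).inter (hH n)).isSigma03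

theorem IsSigma03.preimage {A : Set X} (h : IsSigma03 A) {g : Z → X} (hg : Continuous g) :
    IsSigma03 (g ⁻¹' A) := by
  obtain ⟨G, hG, rfl⟩ := h
  rw [preimage_iUnion]
  exact IsSigma03.iUnion fun n => ((hG n).preimage hg).isSigma03

theorem IsGδ.isSigma03_compl [PerfectlyNormalSpace X] {G : Set X} (h : IsGδ G) :
    IsSigma03 Gᶜ := by
  obtain ⟨U, hU, rfl⟩ := h.eq_iInter_nat
  rw [compl_iInter]
  exact IsSigma03.iUnion fun n => (hU n).isClosed_compl.isGδ.isSigma03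

theorem IsGδ.exists_isGδ_preimage_val {S : Set X} {t : Set S} (h : IsGδ t) :
    ∃ G : Set X, IsGδ G ∧ Subtype.val ⁻¹' G = t := by
  obtain ⟨U, hU, rfl⟩ := h.eq_iInter_nat
  choose V hV hVU using fun n => isOpen_induced_iff.1 (hU n)
  exact ⟨⋂ n, V n, .iInter fun n => (hV n).isGδ, by simp only [preimage_iInter, hVU]⟩

theorem IsSigma03.exists_isSigma03_preimage_val {S : Set X} {t : Set S} (h : IsSigma03 t) :
    ∃ B : Set X, IsSigma03 B ∧ Subtype.val ⁻¹' B = t := by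
  obtain ⟨G, hG, rfl⟩ := h
  choose B hB hBG using fun n => (hG n).exists_isGδ_preimage_val
  exact ⟨⋃ n, B n, .iUnion fun n => (hB n).isSigma03, by simp only [preimage_iUnion, hBG]⟩

end Sigma03

section DecCont

variable {X Y : Type*} [TopologicalSpace X] [TopologicalSpace Y] {f : X → Y} {S T : Set X}

theorem continuous_domRestrict_preimage_val_iff {t : Set X} :
    Continuous ((Subtype.val ⁻¹' t : Set S).domRestrict (S.domRestrict f)) ↔
      ContinuousOn f (S ∩ t) := by
  rw [← continuousOn_iff_continuous_domRestrict, ← Subtype.image_preimage_coe S t,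
    IsInducing.subtypeVal.continuousOn_image_iff]
  rfl

theorem DecCont.exists_cover (h : DecCont (S.domRestrict f)) :
    ∃ B : ℕ → Set X, (∀ n, IsSigma03 (B n)) ∧ S ⊆ ⋃ n, B n ∧
      ∀ n, ContinuousOn f (S ∩ B n) := by
  obtain ⟨A, -, hcov, hA, hcont⟩ := h
  choose B hB hBA using fun n => (hA n).1.exists_isSigma03_preimage_val
  refine ⟨B, hB, fun x hx => ?_, fun n => ?_⟩
  · obtain ⟨n, hn⟩ := mem_iUnion.1 (hcov.symm ▸ mem_univ (⟨x, hx⟩ : S))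
    exact mem_iUnion.2 ⟨n, by rwa [← hBA n] at hn⟩
  · have := hcont n
    rw [← hBA n] at this
    exact continuous_domRestrict_preimage_val_iff.1 this

variable [PerfectlyNormalSpace X]

/-- The partition is the trace on `S` of `disjointed G`; its pieces `G n \ ⋃ i < n, G i` are `Δ⁰₃`
because closed sets are `Gδ`. -/
theorem decCont_restrict_of_isGδ_cover {𝒢 : Set (Set X)} (h𝒢 : 𝒢.Countable)
    (hG : ∀ G ∈ 𝒢, IsGδ G ∧ ContinuousOn f (S ∩ G)) (hS : S ⊆ ⋃₀ 𝒢) :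
    DecCont (S.domRestrict f) := by
  obtain ⟨G, hG, h𝒢G⟩ := h𝒢.exists_seq_sUnion_eq (p := fun G => IsGδ G ∧ ContinuousOn f (S ∩ G))
    ⟨IsGδ.empty, by simp⟩ hG
  have hprefix : ∀ n, IsGδ (⋃ i < n, G i) := fun n =>
    IsGδ.biUnion (finite_Iio n) fun i _ => (hG i).1
  refine ⟨fun n => Subtype.val ⁻¹' disjointed G n,
    fun m n hmn => (disjoint_disjointed G hmn).preimage _, ?_, fun n => ⟨?_, ?_⟩, fun n => ?_⟩
  · rw [← preimage_iUnion, iUnion_disjointed, eq_univ_iff_forall]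
    exact fun x => h𝒢G ▸ hS x.2
  · refine IsSigma03.preimage ?_ continuous_subtype_val
    rw [disjointed_eq_inter_compl, ← compl_iUnion₂]
    exact (hG n).1.isSigma03.inter (hprefix n).isSigma03_compl
  · rw [← preimage_compl, disjointed_eq_inter_compl, ← compl_iUnion₂, compl_inter, compl_compl]
    exact ((hG n).1.isSigma03_compl.union (hprefix n).isSigma03).preimage continuous_subtype_val
  · exact continuous_domRestrict_preimage_val_iff.2 <|
      (hG n).2.mono (inter_subset_inter_right S (disjointed_subset G n))

theorem decCont_restrict_of_cover {ι : Sort*} [Countable ι] {B : ι → Set X}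
    (hB : ∀ i, IsSigma03 (B i)) (hS : S ⊆ ⋃ i, B i) (hf : ∀ i, ContinuousOn f (S ∩ B i)) :
    DecCont (S.domRestrict f) := by
  choose 𝒢 h𝒢c h𝒢 hB𝒢 using fun i => isSigma03_iff_exists_countable.1 (hB i)
  refine decCont_restrict_of_isGδ_cover (countable_iUnion h𝒢c) ?_ ?_
  · simp only [mem_iUnion]
    rintro G ⟨i, hG⟩
    exact ⟨h𝒢 i G hG, (hf i).mono (inter_subset_inter_right S (hB𝒢 i ▸ subset_sUnion_of_mem hG))⟩
  · rwa [sUnion_iUnion, ← iUnion_congr hB𝒢]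

theorem DecCont.restrict_of_subset (hTS : T ⊆ S) (h : DecCont (S.domRestrict f)) :
    DecCont (T.domRestrict f) := by
  obtain ⟨B, hB, hcov, hcont⟩ := h.exists_cover
  exact decCont_restrict_of_cover hB (hTS.trans hcov)
    fun n => (hcont n).mono (inter_subset_inter_left _ hTS)

theorem decCont_restrict_of_subset_union {A₁ A₂ : Set X} (hA₁ : IsSigma03 A₁)
    (hA₂ : IsSigma03 A₂) (hS : S ⊆ A₁ ∪ A₂) (h₁ : DecCont ((S ∩ A₁).domRestrict f))
    (h₂ : DecCont ((S ∩ A₂).domRestrict f)) : DecCont (S.domRestrict f) := by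
  obtain ⟨B₁, hB₁, hcov₁, hcont₁⟩ := h₁.exists_cover
  obtain ⟨B₂, hB₂, hcov₂, hcont₂⟩ := h₂.exists_cover
  refine decCont_restrict_of_cover (B := Sum.elim (fun n => A₁ ∩ B₁ n) (fun n => A₂ ∩ B₂ n))
    (Sum.forall.2 ⟨fun n => hA₁.inter (hB₁ n), fun n => hA₂.inter (hB₂ n)⟩) (fun x hx => ?_)
    (Sum.forall.2 ⟨fun n => by simpa only [Sum.elim_inl, inter_assoc] using hcont₁ n,
      fun n => by simpa only [Sum.elim_inr, inter_assoc] using hcont₂ n⟩)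
  rcases hS hx with hx₁ | hx₂
  · obtain ⟨n, hn⟩ := mem_iUnion.1 (hcov₁ ⟨hx, hx₁⟩)
    exact mem_iUnion.2 ⟨.inl n, hx₁, hn⟩
  · obtain ⟨n, hn⟩ := mem_iUnion.1 (hcov₂ ⟨hx, hx₂⟩)
    exact mem_iUnion.2 ⟨.inr n, hx₂, hn⟩

end DecCont

section Sharp

variable {X Y : Type*} [TopologicalSpace X] [TopologicalSpace Y] {f : X → Y}

theorem SharpP0.mono {P0 : Set Y} {F0 U U' : Set X} (h : SharpP0 f P0 F0 U)
    (hU' : U' ⊆ U) (hne : (U' ∩ F0).Nonempty) : SharpP0 f P0 F0 U' :=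
  ⟨hne, fun W hW hWU' hWF => h.2 W hW (hWU'.trans hU') hWF⟩

theorem exists_decCont_of_not_sharpP0 {P0 : Set Y} {F0 W : Set X} (hW : (W ∩ F0).Nonempty)
    (h : ¬ SharpP0 f P0 F0 W) :
    ∃ W' : Set X, IsOpen W' ∧ W' ⊆ W ∧ (W' ∩ F0).Nonempty ∧
      DecCont ((f ⁻¹' P0 ∩ F0 ∩ W').domRestrict f) := by
  simp only [SharpP0, hW, true_and, not_forall, not_not, exists_prop] at h
  exact h

theorem SharpP0.exists_sharpP0_diff_or [PerfectlyNormalSpace X] (hf : Sigma3Measurable f)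
    {P0 : Set Y} {F0 U : Set X} (hU : IsOpen U) (h : SharpP0 f P0 F0 U) {C₁ C₂ : Set Y}
    (hdisj : Disjoint C₁ C₂) (hcl₁ : IsClosed (Subtype.val ⁻¹' C₁ : Set P0))
    (hcl₂ : IsClosed (Subtype.val ⁻¹' C₂ : Set P0)) :
    ∃ U' : Set X, IsOpen U' ∧ U' ⊆ U ∧
      (SharpP0 f (P0 \ C₁) F0 U' ∨ SharpP0 f (P0 \ C₂) F0 U') := by
  by_contra! hcon
  obtain ⟨U₁, hU₁, hU₁U, hU₁F, hdec₁⟩ := exists_decCont_of_not_sharpP0 h.1 (hcon U hU subset_rfl).1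
  obtain ⟨U₂, hU₂, hU₂U₁, hU₂F, hdec₂⟩ := exists_decCont_of_not_sharpP0 hU₁F (hcon U₁ hU₁ hU₁U).2
  obtain ⟨D₁, hD₁, hCD₁⟩ := isClosed_induced_iff.1 hcl₁
  obtain ⟨D₂, hD₂, hCD₂⟩ := isClosed_induced_iff.1 hcl₂
  have mem_iff : ∀ {C D : Set Y}, (Subtype.val ⁻¹' D : Set P0) = Subtype.val ⁻¹' C →
      ∀ y ∈ P0, y ∈ D ↔ y ∈ C := fun hCD y hy => Set.ext_iff.1 hCD ⟨y, hy⟩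
  refine h.2 U₂ hU₂ (hU₂U₁.trans hU₁U) hU₂F <| decCont_restrict_of_subset_union
    (hf _ hD₁.isOpen_compl) (hf _ hD₂.isOpen_compl) ?_ (hdec₁.restrict_of_subset ?_)
    (hdec₂.restrict_of_subset ?_)
  · rintro x ⟨⟨hxP, -⟩, -⟩
    by_contra! hx
    simp only [mem_union, mem_preimage, mem_compl_iff, not_or, not_not] at hx
    exact disjoint_left.1 hdisj ((mem_iff hCD₁ _ hxP).1 hx.1) ((mem_iff hCD₂ _ hxP).1 hx.2)
  · rintro x ⟨⟨⟨hxP, hxF⟩, hxU⟩, hxD⟩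
    exact ⟨⟨⟨hxP, fun hxC => hxD ((mem_iff hCD₁ _ hxP).2 hxC)⟩, hxF⟩, hU₂U₁ hxU⟩
  · rintro x ⟨⟨⟨hxP, hxF⟩, hxU⟩, hxD⟩
    exact ⟨⟨⟨hxP, fun hxC => hxD ((mem_iff hCD₂ _ hxP).2 hxC)⟩, hxF⟩, hxU⟩

theorem SharpP.congr {P P' : ℕ → Set Y} {F : ℕ → Set X} {k : ℕ} {U : Set X}
    (hP : ∀ i ≤ k, P i = P' i) (h : SharpP f P F k U) : SharpP f P' F k U := by
  induction k generalizing U with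
  | zero => simpa only [SharpP, hP 0 le_rfl] using h
  | succ k ih =>
    refine ⟨hP (k + 1) le_rfl ▸ h.1, fun W hW hWU hWF => ?_⟩
    obtain ⟨W', hW', hW'W, hsharp⟩ := h.2 W hW hWU hWF
    exact ⟨W', hW', hW'W, ih (fun i hi => hP i (hi.trans k.le_succ)) hsharp⟩

theorem SharpP.update_succ {P : ℕ → Set Y} {F : ℕ → Set X} {k : ℕ} {U U' : Set X} {Q : Set Y}
    (h : SharpP f P F (k + 1) U) (hU' : U' ⊆ U) (hQ : SharpP0 f Q (F (k + 1)) U') :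
    SharpP f (Function.update P (k + 1) Q) F (k + 1) U' := by
  refine ⟨by rwa [Function.update_self], fun W hW hWU' hWF => ?_⟩
  obtain ⟨W', hW', hW'W, hsharp⟩ := h.2 W hW (hWU'.trans hU') hWF
  exact ⟨W', hW', hW'W, hsharp.congr fun i hi => (Function.update_of_ne (by omega) _ _).symm⟩

theorem exists_forall_not_sharpP_of_not_sharpP_succ {Q : ℕ → Set Y} {F : ℕ → Set X} {k : ℕ}
    {V : Set X} (h0 : SharpP0 f (Q (k + 1)) (F (k + 1)) V) (h : ¬ SharpP f Q F (k + 1) V) :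
    ∃ W : Set X, IsOpen W ∧ W ⊆ V ∧ (W ∩ F (k + 1)).Nonempty ∧
      ∀ W' : Set X, IsOpen W' → W' ⊆ W → ¬ SharpP f Q F k W' := by
  simpa [SharpP, h0] using h

theorem SharpP.exists_sharpP_update_diff_or [PerfectlyNormalSpace X] (hf : Sigma3Measurable f)
    {P : ℕ → Set Y} {F : ℕ → Set X} {j : ℕ} {C₁ C₂ : Set Y} (hdisj : Disjoint C₁ C₂)
    (hcl₁ : IsClosed (Subtype.val ⁻¹' C₁ : Set (P j)))
    (hcl₂ : IsClosed (Subtype.val ⁻¹' C₂ : Set (P j))) {k : ℕ} {U : Set X} (hU : IsOpen U)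
    (h : SharpP f P F k U) (hj : j ≤ k) :
    ∃ U' : Set X, IsOpen U' ∧ U' ⊆ U ∧
      (SharpP f (Function.update P j (P j \ C₁)) F k U' ∨
        SharpP f (Function.update P j (P j \ C₂)) F k U') := by
  induction k generalizing U with
  | zero =>
    obtain rfl : j = 0 := by omega
    simpa only [SharpP, Function.update_self] using
      SharpP0.exists_sharpP0_diff_or hf hU h hdisj hcl₁ hcl₂
  | succ k ih =>
    rcases hj.eq_or_lt with rfl | hjk
    · obtain ⟨U', hU', hU'U, hor⟩ := SharpP0.exists_sharpP0_diff_or hf hU h.1 hdisj hcl₁ hcl₂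
      exact ⟨U', hU', hU'U, hor.imp (h.update_succ hU'U) (h.update_succ hU'U)⟩
    -- `j ≤ k` leaves level `k + 1` unchanged, so sharpness can only fail below it
    by_contra! hcon
    have top : ∀ {C V}, V ⊆ U → (V ∩ F (k + 1)).Nonempty →
        SharpP0 f (Function.update P j (P j \ C) (k + 1)) (F (k + 1)) V := fun hVU hVF => by
      rw [Function.update_of_ne (by omega)]
      exact h.1.mono hVU hVF
    obtain ⟨W₁, hW₁, hW₁U, hW₁F, hW₁sharp⟩ :=
      exists_forall_not_sharpP_of_not_sharpP_succ (top subset_rfl h.1.1) (hcon U hU subset_rfl).1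
    obtain ⟨W₂, hW₂, hW₂W₁, hW₂F, hW₂sharp⟩ :=
      exists_forall_not_sharpP_of_not_sharpP_succ (top hW₁U hW₁F) (hcon W₁ hW₁ hW₁U).2
    obtain ⟨V, hV, hVW₂, hsharp⟩ := h.2 W₂ hW₂ (hW₂W₁.trans hW₁U) hW₂F
    obtain ⟨V', hV', hV'V, hsharp₁ | hsharp₂⟩ := ih hV hsharp (by omega)
    · exact hW₁sharp V' hV' (hV'V.trans (hVW₂.trans hW₂W₁)) hsharp₁
    · exact hW₂sharp V' hV' (hV'V.trans hVW₂) hsharp₂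

end Sharp

theorem stmt15_general {X Y : Type*} [TopologicalSpace X] [PolishSpace X]
    [TopologicalSpace Y]
    (f : X → Y) (hf : Sigma3Measurable f)
    (k : ℕ) (F : ℕ → Set X)
    (P : ℕ → Set Y)
    (U : Set X) (hU : IsOpen U)
    (hsharp : SharpP f P F k U)
    (j : ℕ) (hj : j ≤ k)
    (m : ℕ) (C : Fin m → Set Y)
    (hCdisj : ∀ l₁ l₂, l₁ ≠ l₂ → Disjoint (C l₁) (C l₂))
    (hCcl : ∀ l, IsClosed ((Subtype.val ⁻¹' (C l)) : Set (P j))) :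
    {l : Fin m | ¬ ∃ U' : Set X, IsOpen U' ∧ U' ⊆ U ∧
      SharpP f (Function.update P j (P j \ C l)) F k U'}.Subsingleton := by
  intro l₁ hl₁ l₂ hl₂
  by_contra hne
  obtain ⟨U', hU', hU'U, hsharp₁ | hsharp₂⟩ :=
    hsharp.exists_sharpP_update_diff_or hf (hCdisj l₁ l₂ hne) (hCcl l₁) (hCcl l₂) hU hj
  exacts [hl₁ ⟨U', hU', hU'U, hsharp₁⟩, hl₂ ⟨U', hU', hU'U, hsharp₂⟩]

/-- Lemma 4.5: at most one of the sets `C l` can destroy `𝓟`-sharpness. -/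
theorem stmt15 {X Y : Type*} [TopologicalSpace X] [PolishSpace X]
    [TopologicalSpace Y] [TopologicalSpace.SeparableSpace Y]
    [TopologicalSpace.MetrizableSpace Y]
    (f : X → Y) (hf : Sigma3Measurable f)
    (k : ℕ) (F : ℕ → Set X) (hFcl : ∀ i ≤ k, IsClosed (F i))
    (hFmono : ∀ i j, i ≤ j → j ≤ k → F j ⊆ F i)
    (P : ℕ → Set Y) (hPdisj : ∀ i j, i ≤ k → j ≤ k → i ≠ j → Disjoint (P i) (P j))
    (U : Set X) (hU : IsOpen U)
    (hsharp : SharpP f P F k U)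
    (j : ℕ) (hj : j ≤ k)
    (m : ℕ) (C : Fin m → Set Y)
    (hCsub : ∀ l, C l ⊆ P j)
    (hCdisj : ∀ l₁ l₂, l₁ ≠ l₂ → Disjoint (C l₁) (C l₂))
    (hCcl : ∀ l, IsClosed ((Subtype.val ⁻¹' (C l)) : Set (P j))) :
    {l : Fin m | ¬ ∃ U' : Set X, IsOpen U' ∧ U' ⊆ U ∧
      SharpP f (Function.update P j (P j \ C l)) F k U'}.Subsingleton :=
  stmt15_general f hf k F P U hU hsharp j hj m C hCdisj hCcl
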